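/- arXiv:2412.19669 — 4 statements merged into one kernel-verified Lean document; each statement's English description precedes it below -/
import Mathlib

section
/- Under the value update J^{t+1}(e(τ)) = r(τ) + J^t(e(τ+1)), if the initial value function satisfies J^0(e(τ)) ≥ r(e(τ), u^0(τ)) + J^0(e(τ+1)) for all τ, then the iterates are monotonically nonincreasing: J^{t+1}(e(τ)) ≤ J^t(e(τ)) for all t and τ. -/
/-- Value iteration monotonicity: `J t τ x` is the value function at iteration `t`,
time `τ`, state `x`; `u t τ x` the policy; `F` the dynamics and `r` the stage cost. -/
theorem stmt_1 {E U : Type*} (F : E → U → E) (r : E → U → ℝ)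
    (J : ℕ → ℕ → E → ℝ) (u : ℕ → ℕ → E → U)
    (hr : ∀ x v, 0 ≤ r x v)
    (hvalue : ∀ t τ x, J (t + 1) τ x = r x (u t τ x) + J t (τ + 1) (F x (u t τ x)))
    (hpolicy : ∀ t τ x v,
      r x (u (t + 1) τ x) + J (t + 1) (τ + 1) (F x (u (t + 1) τ x)) ≤
        r x v + J (t + 1) (τ + 1) (F x v))
    (hinit : ∀ τ x, r x (u 0 τ x) + J 0 (τ + 1) (F x (u 0 τ x)) ≤ J 0 τ x) :
    ∀ t τ x, J (t + 1) τ x ≤ J t τ x := by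
  intro t
  induction t with
  | zero =>
    intro τ x
    rw [hvalue]
    exact hinit τ x
  | succ t ih =>
    intro τ x
    rw [hvalue (t + 1) τ x, hvalue t τ x]
    calc r x (u (t + 1) τ x) + J (t + 1) (τ + 1) (F x (u (t + 1) τ x))
        ≤ r x (u t τ x) + J (t + 1) (τ + 1) (F x (u t τ x)) := hpolicy t τ x _
      _ ≤ r x (u t τ x) + J t (τ + 1) (F x (u t τ x)) := by
          have := ih (τ + 1) (F x (u t τ x)); linarith
end

section
/- Let P be a symmetric positive definite matrix, F a matrix, and φ a nonlinear map with ‖φ(x)‖ ≤ L‖x‖ on a set S. If ‖P‖·L² + 2‖P F‖·L < (β−1)·λ_min(Q̄) for some β > 1 and positive definite Q̄, then for all x ∈ S, ‖F x + φ(x)‖²_P ≤ ‖x‖²_{FᵀPF} + (β−1)‖x‖²_{Q̄}, where ‖y‖²_M denotes yᵀM y. -/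
open scoped RealInnerProductSpace

/-- Perturbed quadratic-form bound: if `‖P‖ L² + 2 ‖P∘F‖ L < (β−1) λmin(Q̄)` then
`‖Fx + φx‖²_P ≤ ‖x‖²_{FᵀPF} + (β−1)‖x‖²_{Q̄}` on `S`. -/
theorem stmt_2 {n : ℕ}
    (P Q F : EuclideanSpace ℝ (Fin n) →L[ℝ] EuclideanSpace ℝ (Fin n))
    (φ : EuclideanSpace ℝ (Fin n) → EuclideanSpace ℝ (Fin n))
    (S : Set (EuclideanSpace ℝ (Fin n)))
    (L β lam : ℝ) (hL : 0 ≤ L) (hβ : 1 < β)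
    (hPsym : ∀ x y, ⟪P x, y⟫ = ⟪x, P y⟫)
    (hPpos : ∀ x, x ≠ 0 → 0 < ⟪x, P x⟫)
    (hQsym : ∀ x y, ⟪Q x, y⟫ = ⟪x, Q y⟫)
    (hQpos : ∀ x, x ≠ 0 → 0 < ⟪x, Q x⟫)
    (hlam : ∀ x, lam * ‖x‖ ^ 2 ≤ ⟪x, Q x⟫)
    (hφ : ∀ x ∈ S, ‖φ x‖ ≤ L * ‖x‖)
    (hcond : ‖P‖ * L ^ 2 + 2 * ‖P.comp F‖ * L < (β - 1) * lam) :
    ∀ x ∈ S,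
      ⟪F x + φ x, P (F x + φ x)⟫ ≤ ⟪F x, P (F x)⟫ + (β - 1) * ⟪x, Q x⟫ := by
  intro x hx
  set a := F x
  set b := φ x with hb_def
  have hb : ‖b‖ ≤ L * ‖x‖ := hφ x hx
  have hcross : ⟪a, P b⟫ = ⟪b, P a⟫ := by
    rw [real_inner_comm, hPsym]
  have hexp : ⟪a + b, P (a + b)⟫ = ⟪a, P a⟫ + 2 * ⟪b, P a⟫ + ⟪b, P b⟫ := by
    rw [map_add, inner_add_left, inner_add_right, inner_add_right, hcross]
    ring
  have h1 : ⟪b, P b⟫ ≤ ‖P‖ * (L * ‖x‖) ^ 2 := by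
    calc ⟪b, P b⟫ ≤ ‖b‖ * ‖P b‖ := real_inner_le_norm _ _
      _ ≤ ‖b‖ * (‖P‖ * ‖b‖) := by
          have := P.le_opNorm b
          nlinarith [norm_nonneg b]
      _ ≤ ‖P‖ * (L * ‖x‖) ^ 2 := by
          nlinarith [mul_le_mul hb hb (norm_nonneg b) (mul_nonneg hL (norm_nonneg x)),
            norm_nonneg P]
  have h2 : ⟪b, P a⟫ ≤ (L * ‖x‖) * (‖P.comp F‖ * ‖x‖) := by
    calc ⟪b, P a⟫ ≤ ‖b‖ * ‖P a‖ := real_inner_le_norm _ _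
      _ ≤ (L * ‖x‖) * (‖P.comp F‖ * ‖x‖) := by
          have h3 : ‖P a‖ ≤ ‖P.comp F‖ * ‖x‖ := (P.comp F).le_opNorm x
          have h4 : (0:ℝ) ≤ ‖P a‖ := norm_nonneg _
          nlinarith [norm_nonneg b, mul_nonneg hL (norm_nonneg x)]
  have hQ : (β - 1) * (lam * ‖x‖ ^ 2) ≤ (β - 1) * ⟪x, Q x⟫ :=
    mul_le_mul_of_nonneg_left (hlam x) (by linarith)
  have hc : (‖P‖ * L ^ 2 + 2 * ‖P.comp F‖ * L) * ‖x‖ ^ 2 ≤ (β - 1) * lam * ‖x‖ ^ 2 :=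
    mul_le_mul_of_nonneg_right (le_of_lt hcond) (sq_nonneg _)
  rw [hexp]
  nlinarith [sq_nonneg (‖x‖)]
end

section
/- Suppose P solves the Lyapunov-type equation FᵀPF − P = −β Q̄ + Γ with Γ ≤ 0 (negative semidefinite), β > 1, Q̄ symmetric positive definite, and the perturbation bound ‖P‖L² + 2‖PF‖L < (β−1)λ_min(Q̄) holds. Then the function V(x) = xᵀPx decreases along trajectories of x⁺ = Fx + φ(x) with ‖φ(x)‖ ≤ L‖x‖: V(x⁺) − V(x) ≤ −xᵀQ̄x for all x. -/
open scoped RealInnerProductSpace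

/-- Lyapunov decrease along the perturbed dynamics `x⁺ = F x + φ x`:
if `FᵀPF − P = −β Q̄ + Γ` with `Γ ⪯ 0`, `β > 1` and the perturbation bound holds,
then `V(x⁺) − V(x) ≤ −xᵀQ̄x` where `V(x) = xᵀPx`. -/
theorem stmt_3 {n : ℕ}
    (P Q F Γ : EuclideanSpace ℝ (Fin n) →L[ℝ] EuclideanSpace ℝ (Fin n))
    (φ : EuclideanSpace ℝ (Fin n) → EuclideanSpace ℝ (Fin n))
    (L β lam : ℝ) (hL : 0 ≤ L) (hβ : 1 < β)
    (hPsym : ∀ x y, ⟪P x, y⟫ = ⟪x, P y⟫)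
    (hPpos : ∀ x, x ≠ 0 → 0 < ⟪x, P x⟫)
    (hQsym : ∀ x y, ⟪Q x, y⟫ = ⟪x, Q y⟫)
    (hQpos : ∀ x, x ≠ 0 → 0 < ⟪x, Q x⟫)
    (hΓsym : ∀ x y, ⟪Γ x, y⟫ = ⟪x, Γ y⟫)
    (hΓnsd : ∀ x, ⟪x, Γ x⟫ ≤ 0)
    (hLyap : ∀ x, ⟪F x, P (F x)⟫ - ⟪x, P x⟫ = -β * ⟪x, Q x⟫ + ⟪x, Γ x⟫)
    (hlam : ∀ x, lam * ‖x‖ ^ 2 ≤ ⟪x, Q x⟫)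
    (hφ : ∀ x, ‖φ x‖ ≤ L * ‖x‖)
    (hcond : ‖P‖ * L ^ 2 + 2 * ‖P.comp F‖ * L < (β - 1) * lam) :
    ∀ x, ⟪F x + φ x, P (F x + φ x)⟫ - ⟪x, P x⟫ ≤ -⟪x, Q x⟫ := by
  intro x
  have hβ1 : (0:ℝ) < β - 1 := by linarith
  have hnx : (0:ℝ) ≤ ‖x‖ := norm_nonneg x
  have hφx : ‖φ x‖ ≤ L * ‖x‖ := hφ x
  have hφnn : (0:ℝ) ≤ ‖φ x‖ := norm_nonneg _
  -- cross term bound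
  have hPFx : ‖P (F x)‖ ≤ ‖P.comp F‖ * ‖x‖ := by
    exact (P.comp F).le_opNorm x
  have hcross : ⟪φ x, P (F x)⟫ ≤ (‖P.comp F‖ * L) * ‖x‖ ^ 2 := by
    calc ⟪φ x, P (F x)⟫ ≤ ‖φ x‖ * ‖P (F x)‖ := real_inner_le_norm _ _
    _ ≤ (L * ‖x‖) * (‖P.comp F‖ * ‖x‖) := by
        exact mul_le_mul hφx hPFx (norm_nonneg _) (mul_nonneg hL hnx)
    _ = (‖P.comp F‖ * L) * ‖x‖ ^ 2 := by ring
  have hquad : ⟪φ x, P (φ x)⟫ ≤ (‖P‖ * L ^ 2) * ‖x‖ ^ 2 := by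
    have h1 : ⟪φ x, P (φ x)⟫ ≤ ‖φ x‖ * ‖P (φ x)‖ := real_inner_le_norm _ _
    have h2 : ‖P (φ x)‖ ≤ ‖P‖ * ‖φ x‖ := P.le_opNorm _
    have h3 : ‖φ x‖ * ‖P (φ x)‖ ≤ (L * ‖x‖) * (‖P‖ * (L * ‖x‖)) :=
      mul_le_mul hφx (h2.trans (mul_le_mul_of_nonneg_left hφx (norm_nonneg P)))
        (norm_nonneg _) (mul_nonneg hL hnx)
    have h4 : (L * ‖x‖) * (‖P‖ * (L * ‖x‖)) = (‖P‖ * L ^ 2) * ‖x‖ ^ 2 := by ring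
    linarith
  have hexp : ⟪F x + φ x, P (F x + φ x)⟫
      = ⟪F x, P (F x)⟫ + 2 * ⟪φ x, P (F x)⟫ + ⟪φ x, P (φ x)⟫ := by
    have h1 : ⟪F x, P (φ x)⟫ = ⟪φ x, P (F x)⟫ := by
      rw [← hPsym, real_inner_comm]
    simp only [map_add, inner_add_left, inner_add_right]
    rw [h1]; ring
  have hlamx : (β - 1) * (lam * ‖x‖ ^ 2) ≤ (β - 1) * ⟪x, Q x⟫ :=
    mul_le_mul_of_nonneg_left (hlam x) (le_of_lt hβ1)
  have hc : (‖P‖ * L ^ 2 + 2 * ‖P.comp F‖ * L) * ‖x‖ ^ 2 ≤ (β - 1) * lam * ‖x‖ ^ 2 :=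
    mul_le_mul_of_nonneg_right (le_of_lt hcond) (sq_nonneg _)
  have := hLyap x
  have := hΓnsd x
  nlinarith [hcross, hquad, hlamx, hc]
end

section
/- Suppose the decomposed policy update over robots coincides with the centralized update: if u_i depends only on the neighboring states e_{N_i} and the cost decomposes as J(e) = ∑_i J_i(e_{N_i}), then minimizing each r_i(e_{N_i}, u_i) + ∑_{j ∈ N̄_i} J_j(e_{N_j}⁺) over u_i for every i yields the same minimizer profile as jointly minimizing r(e, u) + J(e⁺) over u = (u_1,…,u_M), provided each local next state e_{N_j}⁺ depends on u_i only for j ∈ N̄_i. -/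
/-- Equivalence of the decomposed (per-robot) policy update and the centralized
update: with local dynamics `e_j⁺ = f j (u j)` (the next local state depends only
on the local control `u j`), stage cost `∑ i, r i (u i)` and separable value
`∑ j, J j (e_j⁺)`, the profile obtained by each robot minimizing its local
objective `r i u_i + ∑_{j ∈ N̄ i} J j (e_j⁺)` over `u_i` (others fixed) is a
minimizer of the joint objective, and conversely. -/
theorem stmt_13 {M : ℕ} (E U : Fin M → Type*)
    (Nbar : Fin M → Finset (Fin M)) (hself : ∀ i, i ∈ Nbar i)
    (f : ∀ j, U j → E j) (r : ∀ i, U i → ℝ) (J : ∀ j, E j → ℝ)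
    (ustar : ∀ i, U i) :
    (∀ i, ∀ v : U i,
        r i (ustar i) + ∑ j ∈ Nbar i, J j (f j (ustar j)) ≤
          r i v + ∑ j ∈ Nbar i, J j (f j (Function.update ustar i v j))) ↔
      (∀ u : ∀ i, U i,
        (∑ i, r i (ustar i)) + ∑ j, J j (f j (ustar j)) ≤
          (∑ i, r i (u i)) + ∑ j, J j (f j (u j))) := by
  have reduce : ∀ (i : Fin M) (v : U i),
      (r i (ustar i) + ∑ j ∈ Nbar i, J j (f j (ustar j)) ≤
        r i v + ∑ j ∈ Nbar i, J j (f j (Function.update ustar i v j))) ↔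
      (r i (ustar i) + J i (f i (ustar i)) ≤ r i v + J i (f i v)) := by
    intro i v
    rw [← Finset.add_sum_erase _ (fun j => J j (f j (ustar j))) (hself i),
        ← Finset.add_sum_erase _ (fun j => J j (f j (Function.update ustar i v j))) (hself i)]
    have h1 : ∀ j ∈ (Nbar i).erase i,
        J j (f j (Function.update ustar i v j)) = J j (f j (ustar j)) := by
      intro j hj
      rw [Function.update_of_ne (Finset.ne_of_mem_erase hj)]
    rw [Finset.sum_congr rfl h1, Function.update_self]
    constructor <;> intro h <;> linarith
  constructor
  · intro h u
    have key : ∀ i : Fin M, r i (ustar i) + J i (f i (ustar i)) ≤ r i (u i) + J i (f i (u i)) :=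
      fun i => (reduce i (u i)).mp (h i (u i))
    have := Finset.sum_le_sum (fun i (_ : i ∈ Finset.univ) => key i)
    simpa [Finset.sum_add_distrib, add_comm, add_left_comm, add_assoc] using this
  · intro h i v
    rw [reduce]
    have := h (Function.update ustar i v)
    rw [← Finset.add_sum_erase _ (fun j => r j (ustar j)) (Finset.mem_univ i),
        ← Finset.add_sum_erase _ (fun j => J j (f j (ustar j))) (Finset.mem_univ i),
        ← Finset.add_sum_erase _ (fun j => r j (Function.update ustar i v j)) (Finset.mem_univ i),
        ← Finset.add_sum_erase _ (fun j => J j (f j (Function.update ustar i v j)))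
          (Finset.mem_univ i)] at this
    have h1 : ∀ j ∈ Finset.univ.erase i,
        r j (Function.update ustar i v j) = r j (ustar j) := by
      intro j hj; rw [Function.update_of_ne (Finset.ne_of_mem_erase hj)]
    have h2 : ∀ j ∈ Finset.univ.erase i,
        J j (f j (Function.update ustar i v j)) = J j (f j (ustar j)) := by
      intro j hj; rw [Function.update_of_ne (Finset.ne_of_mem_erase hj)]
    rw [Finset.sum_congr rfl h1, Finset.sum_congr rfl h2, Function.update_self] at this
    linarith
end
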